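/- Under the setting of the previous lemma (prior π, likelihood L with 0 < c = sup L < ∞, m = ∫ L dπ > 0, posterior π_x(S) = ∫_S L dπ / m, LR-measure ν(S) = sup_{θ∈S} L(θ)/c): if S is measurable with 0 < π(S) ≤ m/c, then π_x(S) ≤ ν(S). -/

import Mathlib

open MeasureTheory

theorem stmt_10 {Θ : Type*} [MeasurableSpace Θ] (π : Measure Θ) [IsProbabilityMeasure π]
    (L : Θ → ℝ) (hLmeas : Measurable L) (hL0 : ∀ θ, 0 ≤ L θ)
    (hInt : Integrable L π)
    (c : ℝ) (hc : c = sSup (Set.range L)) (hc0 : 0 < c)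
    (m : ℝ) (hm : m = ∫ θ, L θ ∂π) (hm0 : 0 < m)
    (S : Set Θ) (hS : MeasurableSet S)
    (hπS : 0 < (π S).toReal) (hπS' : (π S).toReal ≤ m / c) :
    (∫ θ in S, L θ ∂π) / m ≤ sSup (L '' S) / c := by
  have hbdd : BddAbove (Set.range L) := by
    by_contra h
    rw [Real.sSup_of_not_bddAbove h] at hc
    linarith
  have hSne : S.Nonempty := by
    rw [Set.nonempty_iff_ne_empty]
    intro h
    rw [h] at hπS
    simp at hπS
  set b := sSup (L '' S) with hb
  have hbddS : BddAbove (L '' S) := hbdd.mono (Set.image_subset_range L S)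
  have hble : ∀ θ ∈ S, L θ ≤ b := fun θ hθ => le_csSup hbddS ⟨θ, hθ, rfl⟩
  obtain ⟨θ₀, hθ₀⟩ := hSne
  have hb0 : 0 ≤ b := le_trans (hL0 θ₀) (hble θ₀ hθ₀)
  have hmeasfin : π S ≠ ⊤ := measure_ne_top π S
  have hint : (∫ θ in S, L θ ∂π) ≤ (π S).toReal * b := by
    calc (∫ θ in S, L θ ∂π) ≤ ∫ _ in S, b ∂π := by
          apply setIntegral_mono_on hInt.integrableOn
            (integrableOn_const hmeasfin) hS hble
      _ = (π S).toReal * b := by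
          rw [setIntegral_const, smul_eq_mul]; rfl
  have key : (∫ θ in S, L θ ∂π) ≤ m / c * b :=
    hint.trans (by nlinarith)
  rw [div_le_div_iff₀ hm0 hc0]
  calc (∫ θ in S, L θ ∂π) * c ≤ (m / c * b) * c := by nlinarith
    _ = b * m := by field_simp
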